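/- arXiv:2203.00987 — 2 statements merged into one kernel-verified Lean document; each statement's English description precedes it below -/
import Mathlib

section
/- The zero vector is the unique minimizer of the Lasso objective P if and only if λ ≥ λ_max, where λ_max = max_i |⟨a_i, y⟩| = ‖Aᵀy‖_∞. -/
/-- Euclidean norm of a vector in ℝ^m. -/
noncomputable def norm2 {m : ℕ} (v : Fin m → ℝ) : ℝ := Real.sqrt (∑ i, v i ^ 2)

/-- ℓ1 norm of a vector in ℝ^n. -/
def norm1 {n : ℕ} (x : Fin n → ℝ) : ℝ := ∑ i, |x i|

/-- Canonical inner product on ℝ^m. -/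
def dot {m : ℕ} (a u : Fin m → ℝ) : ℝ := ∑ i, a i * u i

/-- Lasso primal objective P(x) = (1/2)‖y − Ax‖₂² + λ‖x‖₁. -/
noncomputable def Pobj {m n : ℕ} (A : Matrix (Fin m) (Fin n) ℝ) (y : Fin m → ℝ)
    (lam : ℝ) (x : Fin n → ℝ) : ℝ :=
  (1 / 2) * norm2 (y - A.mulVec x) ^ 2 + lam * norm1 x

/-- Lasso dual objective D(u) = (1/2)‖y‖₂² − (1/2)‖y − u‖₂². -/
noncomputable def Dobj {m : ℕ} (y u : Fin m → ℝ) : ℝ :=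
  (1 / 2) * norm2 y ^ 2 - (1 / 2) * norm2 (y - u) ^ 2

/-- Dual feasibility: u ∈ Δ iff |⟨a_i, u⟩| ≤ λ for every column a_i of A. -/
def feas {m n : ℕ} (A : Matrix (Fin m) (Fin n) ℝ) (lam : ℝ) (u : Fin m → ℝ) : Prop :=
  ∀ i : Fin n, |dot (fun j => A j i) u| ≤ lam

/-!
Expanding the square gives `P x - P 0 = ‖A x‖² / 2 - ⟪x, Aᵀ y⟫ + λ ‖x‖₁`. If every
`|⟪a_i, y⟫| ≤ λ`, the linear term is bounded by `λ ‖x‖₁`, and the difference is positive unless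
`A x = 0`, in which case the linear term vanishes and `λ ‖x‖₁ > 0` remains. If some
`|⟪a_i, y⟫| > λ`, a short step from `0` along `± e_i` makes the linear gain beat the quadratic
cost.
-/

open Matrix

lemma norm2_sq {m : ℕ} (v : Fin m → ℝ) : norm2 v ^ 2 = v ⬝ᵥ v := by
  rw [norm2, Real.sq_sqrt (by positivity)]
  simp only [dotProduct, sq]

lemma dot_col_eq_transpose_mulVec {m n : ℕ} (A : Matrix (Fin m) (Fin n) ℝ) (y : Fin m → ℝ)
    (i : Fin n) : dot (fun j => A j i) y = (Aᵀ *ᵥ y) i := rfl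

lemma Pobj_eq_Pobj_zero_add {m n : ℕ} (A : Matrix (Fin m) (Fin n) ℝ) (y : Fin m → ℝ)
    (lam : ℝ) (x : Fin n → ℝ) :
    Pobj A y lam x =
      Pobj A y lam 0 + (A *ᵥ x) ⬝ᵥ (A *ᵥ x) / 2 - x ⬝ᵥ (Aᵀ *ᵥ y) + lam * norm1 x := by
  simp only [Pobj, norm2_sq, norm1, mulVec_zero, sub_zero, Pi.zero_apply, abs_zero,
    Finset.sum_const_zero, mul_zero, add_zero]
  rw [dotProduct_transpose_mulVec]
  simp only [sub_dotProduct, dotProduct_sub, dotProduct_comm (A *ᵥ x) y]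
  ring

lemma mulVec_single_dotProduct_self {m n : ℕ} (A : Matrix (Fin m) (Fin n) ℝ) (i : Fin n) (v : ℝ) :
    (A *ᵥ Pi.single i v) ⬝ᵥ (A *ᵥ Pi.single i v) = (A.col i ⬝ᵥ A.col i) * v ^ 2 := by
  have hAe : A *ᵥ Pi.single i v = v • A.col i := by
    ext j; simp [mulVec, dotProduct, Pi.single_apply, mul_comm]
  rw [hAe, smul_dotProduct, dotProduct_smul, smul_eq_mul, smul_eq_mul]
  ring

lemma norm1_single {n : ℕ} (i : Fin n) (v : ℝ) : norm1 (Pi.single i v) = |v| := by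
  simp [norm1, Pi.single_apply, apply_ite abs]

lemma exists_quadratic_sub_add_abs_neg {S c lam : ℝ} (hS : 0 ≤ S) (h : lam < |c|) :
    ∃ v : ℝ, S * v ^ 2 / 2 - v * c + lam * |v| < 0 := by
  set t := (|c| - lam) / (S + 1)
  have ht : 0 < t := div_pos (by linarith) (by linarith)
  have hSt : S * t < |c| - lam := by
    rw [mul_div_assoc', div_lt_iff₀ (by linarith)]
    nlinarith
  rcases le_total 0 c with hc | hc
  · refine ⟨t, ?_⟩
    rw [abs_of_nonneg hc] at hSt
    rw [abs_of_pos ht]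
    nlinarith
  · refine ⟨-t, ?_⟩
    rw [abs_of_nonpos hc] at hSt
    rw [abs_neg, abs_of_pos ht]
    nlinarith

lemma exists_Pobj_lt_Pobj_zero {m n : ℕ} {A : Matrix (Fin m) (Fin n) ℝ} {y : Fin m → ℝ}
    {lam : ℝ} {i : Fin n} (h : lam < |(Aᵀ *ᵥ y) i|) : ∃ x, Pobj A y lam x < Pobj A y lam 0 := by
  have hcol : 0 ≤ A.col i ⬝ᵥ A.col i := by simpa using dotProduct_self_star_nonneg (A.col i)
  obtain ⟨v, hv⟩ := exists_quadratic_sub_add_abs_neg hcol h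
  refine ⟨Pi.single i v, ?_⟩
  rw [Pobj_eq_Pobj_zero_add, mulVec_single_dotProduct_self, single_dotProduct, norm1_single]
  linarith

lemma dotProduct_le_mul_norm1 {n : ℕ} {c : Fin n → ℝ} {lam : ℝ} (hc : ∀ i, |c i| ≤ lam)
    (x : Fin n → ℝ) : x ⬝ᵥ c ≤ lam * norm1 x := by
  rw [norm1, Finset.mul_sum]
  refine Finset.sum_le_sum fun i _ => ?_
  calc x i * c i ≤ |x i| * |c i| := (le_abs_self _).trans (abs_mul _ _).le
    _ ≤ lam * |x i| := by rw [mul_comm]; exact mul_le_mul_of_nonneg_right (hc i) (abs_nonneg _)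

lemma Pobj_zero_lt_of_forall_abs_le {m n : ℕ} {A : Matrix (Fin m) (Fin n) ℝ} {y : Fin m → ℝ}
    {lam : ℝ} (hlam : 0 < lam) (h : ∀ i, |(Aᵀ *ᵥ y) i| ≤ lam) {x : Fin n → ℝ} (hx : x ≠ 0) :
    Pobj A y lam 0 < Pobj A y lam x := by
  rw [Pobj_eq_Pobj_zero_add A y lam x]
  have hlin := dotProduct_le_mul_norm1 h x
  by_cases hAx : A *ᵥ x = 0
  · have hxc : x ⬝ᵥ (Aᵀ *ᵥ y) = 0 := by
      rw [dotProduct_transpose_mulVec, hAx, dotProduct_zero]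
    have hnorm : 0 < norm1 x := by
      obtain ⟨i, hi⟩ := Function.ne_iff.mp hx
      exact Finset.sum_pos' (fun i _ => abs_nonneg _) ⟨i, Finset.mem_univ i, abs_pos.mpr hi⟩
    rw [hAx, hxc, dotProduct_zero]
    linarith [mul_pos hlam hnorm]
  · have hquad : 0 < (A *ᵥ x) ⬝ᵥ (A *ᵥ x) := by simpa using dotProduct_self_star_pos_iff.mpr hAx
    linarith

theorem lasso_zero_unique_minimizer_iff_general (m n : ℕ) (hn : 0 < n)
    (A : Matrix (Fin m) (Fin n) ℝ) (y : Fin m → ℝ) (lam : ℝ) (hlam : 0 < lam) :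
    (∀ x : Fin n → ℝ, x ≠ 0 → Pobj A y lam 0 < Pobj A y lam x) ↔
      (Finset.univ.sup' (Finset.univ_nonempty_iff.mpr (Fin.pos_iff_nonempty.mp hn))
        fun i : Fin n => |dot (fun j => A j i) y|) ≤ lam := by
  simp only [Finset.sup'_le_iff, Finset.mem_univ, true_imp_iff, dot_col_eq_transpose_mulVec]
  refine ⟨fun h i => ?_, fun h x hx => Pobj_zero_lt_of_forall_abs_le hlam h hx⟩
  by_contra! hi
  obtain ⟨x, hx⟩ := exists_Pobj_lt_Pobj_zero hi
  have hx0 : x ≠ 0 := by rintro rfl; exact hx.false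
  exact (h x hx0).asymm hx

/-- the zero vector is the unique minimizer of P iff λ ≥ λ_max = max_i |⟨a_i, y⟩|. -/
theorem lasso_zero_unique_minimizer_iff (m n : ℕ) (hm : 0 < m) (hn : 0 < n)
    (A : Matrix (Fin m) (Fin n) ℝ) (y : Fin m → ℝ) (lam : ℝ) (hlam : 0 < lam) :
    (∀ x : Fin n → ℝ, x ≠ 0 → Pobj A y lam 0 < Pobj A y lam x) ↔
      (Finset.univ.sup' (Finset.univ_nonempty_iff.mpr (Fin.pos_iff_nonempty.mp hn))
        fun i : Fin n => |dot (fun j => A j i) y|) ≤ lam :=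
  lasso_zero_unique_minimizer_iff_general m n hn A y lam hlam
end

section
/- Inclusion of the Hölder dome in the GAP dome (Theorem 2, first part): for every x ∈ ℝ^n and every u ∈ Δ, D_new(x,u) ⊆ D_gap(x,u). Explicitly, with c = (1/2)(y + u) and r = (1/2)‖y − u‖₂: every u' ∈ ℝ^m satisfying ‖u' − c‖₂ ≤ r and ⟨A x, u'⟩ ≤ λ‖x‖₁ also satisfies ⟨y − c, u'⟩ ≤ ⟨y − c, c⟩ + gap(x,u) − r². -/
/-!
Write `d = y - c` and `w = u' - c`, so that `‖d‖ = r` and `u = c - d`. Completing the square,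
`½‖y - Ax‖² + ⟨Ax, u'⟩ - ½‖y‖² = ½‖Ax - (d - w)‖² - ½‖d - w‖²`, and the Hölder constraint
`⟨Ax, u'⟩ ≤ λ‖x‖₁` bounds the left side by the part of the gap not involving `u`. What remains is
`⟨d, w⟩ + ‖d‖² ≤ ½‖Ax - (d - w)‖² - ½‖d - w‖² + 2‖d‖²`, whose slack is
`½‖Ax - (d - w)‖² + ½(‖d‖² - ‖w‖²) ≥ 0` because `u'` lies in the ball `‖w‖ ≤ ‖d‖`.
-/

open scoped RealInnerProductSpace

section InnerProductSpace

variable {E : Type*} [NormedAddCommGroup E] [InnerProductSpace ℝ E]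

lemma half_norm_sub_sq_add_inner_sub_half_norm_sq (y b v : E) :
    ‖y - b‖ ^ 2 / 2 + ⟪b, v⟫ - ‖y‖ ^ 2 / 2 = ‖b - (y - v)‖ ^ 2 / 2 - ‖y - v‖ ^ 2 / 2 := by
  rw [norm_sub_sq_real, norm_sub_sq_real b, inner_sub_right, real_inner_comm y b]
  ring

lemma inner_add_norm_sq_le_of_norm_le (b d w : E) (hw : ‖w‖ ≤ ‖d‖) :
    ⟪d, w⟫ + ‖d‖ ^ 2 ≤ ‖b - (d - w)‖ ^ 2 / 2 - ‖d - w‖ ^ 2 / 2 + 2 * ‖d‖ ^ 2 := by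
  nlinarith [norm_nonneg w, sq_nonneg ‖b - (d - w)‖, norm_sub_sq_real d w]

theorem gap_dome_inequality_of_holder_dome (y u v b : E) {t : ℝ}
    (hv : ‖v - midpoint ℝ y u‖ ≤ ‖y - u‖ / 2) (hb : ⟪b, v⟫ ≤ t) :
    ⟪y - midpoint ℝ y u, v⟫ ≤ ⟪y - midpoint ℝ y u, midpoint ℝ y u⟫
      + (‖y - b‖ ^ 2 / 2 + t - (‖y‖ ^ 2 / 2 - ‖y - u‖ ^ 2 / 2)) - (‖y - u‖ / 2) ^ 2 := by
  set c := midpoint ℝ y u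
  have hr : ‖y - u‖ / 2 = ‖y - c‖ := by
    rw [← dist_eq_norm, ← dist_eq_norm, dist_left_midpoint]; norm_num; ring
  have hr_sq : ‖y - u‖ ^ 2 / 2 = 2 * ‖y - c‖ ^ 2 := by
    rw [show ‖y - u‖ = 2 * ‖y - c‖ by linarith]; ring
  have hinner : ⟪y - c, v⟫ = ⟪y - c, c⟫ + ⟪y - c, v - c⟫ := by rw [inner_sub_right]; ring
  have hyv : y - v = (y - c) - (v - c) := by abel
  have hball := inner_add_norm_sq_le_of_norm_le b (y - c) (v - c) (hr ▸ hv)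
  have hsquare := half_norm_sub_sq_add_inner_sub_half_norm_sq y b v
  rw [← hyv] at hball
  rw [hinner, hr]
  linarith

end InnerProductSpace

lemma norm2_eq_norm_toLp {m : ℕ} (v : Fin m → ℝ) : norm2 v = ‖WithLp.toLp 2 v‖ := by
  simp [norm2, EuclideanSpace.norm_eq]

lemma dot_eq_inner_toLp {m : ℕ} (a v : Fin m → ℝ) :
    dot a v = ⟪WithLp.toLp 2 a, WithLp.toLp 2 v⟫ := by
  simp [dot, EuclideanSpace.inner_toLp_toLp, dotProduct, mul_comm]

theorem holder_dome_subset_gap_dome_general (m n : ℕ)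
    (A : Matrix (Fin m) (Fin n) ℝ) (y : Fin m → ℝ) (lam : ℝ)
    (x : Fin n → ℝ) (u : Fin m → ℝ)
    (c : Fin m → ℝ) (hc : c = fun i => (y i + u i) / 2)
    (r : ℝ) (hr : r = (1 / 2) * norm2 (y - u)) :
    ∀ u' : Fin m → ℝ, norm2 (u' - c) ≤ r → dot (A.mulVec x) u' ≤ lam * norm1 x →
      dot (y - c) u' ≤ dot (y - c) c + (Pobj A y lam x - Dobj y u) - r ^ 2 := by
  intro u' hball hholder
  have hc' : WithLp.toLp 2 c = midpoint ℝ (WithLp.toLp 2 y) (WithLp.toLp 2 u) := by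
    ext i
    simp only [hc, midpoint_eq_smul_add, invOf_eq_inv, smul_add, PiLp.add_apply,
      PiLp.smul_apply, smul_eq_mul]
    ring
  have hr' : r = ‖WithLp.toLp 2 y - WithLp.toLp 2 u‖ / 2 := by
    rw [hr, norm2_eq_norm_toLp, WithLp.toLp_sub]; ring
  simp only [Pobj, Dobj, norm2_eq_norm_toLp, dot_eq_inner_toLp, WithLp.toLp_sub, hc', hr']
    at hball hholder ⊢
  linarith [gap_dome_inequality_of_holder_dome _ _ _ _ hball hholder]

/-- Theorem 2, first part: inclusion of the Hölder dome in the GAP dome: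
with c = (1/2)(y + u) and r = (1/2)‖y − u‖₂, any u' with ‖u' − c‖₂ ≤ r and
⟨A x, u'⟩ ≤ λ‖x‖₁ satisfies ⟨y − c, u'⟩ ≤ ⟨y − c, c⟩ + gap(x,u) − r². -/
theorem holder_dome_subset_gap_dome (m n : ℕ) (hm : 0 < m) (hn : 0 < n)
    (A : Matrix (Fin m) (Fin n) ℝ) (y : Fin m → ℝ) (lam : ℝ) (hlam : 0 < lam)
    (x : Fin n → ℝ) (u : Fin m → ℝ) (hu : feas A lam u)
    (c : Fin m → ℝ) (hc : c = fun i => (y i + u i) / 2)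
    (r : ℝ) (hr : r = (1 / 2) * norm2 (y - u)) :
    ∀ u' : Fin m → ℝ, norm2 (u' - c) ≤ r → dot (A.mulVec x) u' ≤ lam * norm1 x →
      dot (y - c) u' ≤ dot (y - c) c + (Pobj A y lam x - Dobj y u) - r ^ 2 :=
  holder_dome_subset_gap_dome_general m n A y lam x u c hc r hr
end
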